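/- arXiv:1711.02628 — 3 statements merged into one kernel-verified Lean document; each statement's English description precedes it below -/
import Mathlib

section
/- Let V be a lattice with elementary divisors a₁,...,a_m (with aᵢ | aᵢ₊₁), and let p be a prime such that p divides a_{s+1} but p does not divide aⱼ for all j ≤ s. Then the ℤ/p-vector space V_p/V_p^⊥ has dimension s, where V_p = V/pV carries the induced ℤ/p-bilinear form and V_p^⊥ is its radical. -/
/-! Reducing the Smith normal form `U * A * T = diagonal a` modulo `p` keeps `U` and `T`
invertible, so `A mod p` has the rank of `diagonal (a mod p)`. Since the `aᵢ` form a
divisibility chain and `p ∣ a_{s+1}`, exactly the first `s` of them survive modulo `p`. -/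

open Matrix

theorem not_dvd_iff_lt_of_dvd_chain {ι α : Type*} [LinearOrder ι] [Semigroup α]
    {a : ι → α} {p : α} {k : ι} (hchain : ∀ i j, i ≤ j → a i ∣ a j) (hk : p ∣ a k)
    (hlt : ∀ j < k, ¬ p ∣ a j) (i : ι) : ¬ p ∣ a i ↔ i < k :=
  ⟨fun h => lt_of_not_ge fun hki => h (hk.trans (hchain k i hki)), hlt i⟩

namespace Matrix

variable {m n : Type*} [Fintype n]

theorem finrank_quotient_ker_mulVecLin {R : Type*} [CommRing R] (B : Matrix m n R) :
    Module.finrank R ((n → R) ⧸ LinearMap.ker B.mulVecLin) = B.rank :=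
  B.mulVecLin.quotKerEquivRange.finrank_eq

theorem isUnit_det_map [DecidableEq n] {R S : Type*} [CommRing R] [CommRing S] (f : R →+* S)
    {U : Matrix n n R} (hU : IsUnit U.det) : IsUnit (U.map f).det := by
  simpa only [← RingHom.mapMatrix_apply, ← RingHom.map_det] using hU.map f

theorem rank_eq_card_of_mul_mul_eq_diagonal [DecidableEq n] {K : Type*} [Field K] [DecidableEq K]
    {B U T : Matrix n n K} {d : n → K} (hU : IsUnit U.det) (hT : IsUnit T.det)
    (h : U * B * T = diagonal d) : B.rank = Fintype.card {i // d i ≠ 0} := by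
  rw [← rank_diagonal, ← h, rank_mul_eq_left_of_isUnit_det _ _ hT,
    rank_mul_eq_right_of_isUnit_det _ _ hU]

end Matrix

theorem rank_mod_p_eq_of_elementary_divisors_general (μ s : ℕ)
    (hsμ : s < μ)
    (A U T : Matrix (Fin μ) (Fin μ) ℤ) (a : Fin μ → ℤ)
    (hU : U.det = 1 ∨ U.det = -1) (hT : T.det = 1 ∨ T.det = -1)
    (hS : U * A * T = Matrix.diagonal a)
    (hadvd : ∀ i j : Fin μ, i ≤ j → a i ∣ a j)
    (p : ℕ) [Fact p.Prime]
    (hps : (p : ℤ) ∣ a ⟨s, hsμ⟩)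
    (hpnd : ∀ j : Fin μ, (j : ℕ) < s → ¬ (p : ℤ) ∣ a j) :
    Module.finrank (ZMod p)
      ((Fin μ → ZMod p) ⧸
        LinearMap.ker (Matrix.mulVecLin (A.map (Int.cast : ℤ → ZMod p)))) = s := by
  classical
  let f := Int.castRingHom (ZMod p)
  have hdiag : U.map f * A.map f * T.map f = diagonal fun i => f (a i) := by
    rw [← Matrix.map_mul, ← Matrix.map_mul, hS, diagonal_map (map_zero f)]
  have hsurvive (i : Fin μ) : f (a i) ≠ 0 ↔ (i : ℕ) < s := by
    rw [Ne, eq_intCast, ZMod.intCast_zmod_eq_zero_iff_dvd]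
    exact not_dvd_iff_lt_of_dvd_chain hadvd hps hpnd i
  rw [finrank_quotient_ker_mulVecLin]
  change (A.map f).rank = s
  rw [rank_eq_card_of_mul_mul_eq_diagonal (isUnit_det_map f (Int.isUnit_iff.2 hU))
      (isUnit_det_map f (Int.isUnit_iff.2 hT)) hdiag,
    Fintype.card_congr (Equiv.subtypeEquivRight hsurvive), Fintype.card_fin_lt_of_le hsμ.le]

/-- Let `V` be a lattice with elementary divisors `a₁,…,a_m` (with `aᵢ ∣ aᵢ₊₁`), and
let `p` be a prime dividing `a_{s+1}` but none of `a₁,…,a_s`.  Then the `ℤ/p`-vector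
space `V_p / V_p^⊥` has dimension `s`, where `V_p = V/pV` with the induced bilinear
form (identified, via the basis in which the intersection matrix is `A`, with
`(ℤ/p)^μ` equipped with the form given by `A mod p`). -/
theorem rank_mod_p_eq_of_elementary_divisors (μ m s : ℕ) (hm : m ≤ μ) (hsm : s < m)
    (hsμ : s < μ)
    (A U T : Matrix (Fin μ) (Fin μ) ℤ) (a : Fin μ → ℤ)
    (hAsymm : A.IsSymm)
    (hU : U.det = 1 ∨ U.det = -1) (hT : T.det = 1 ∨ T.det = -1)
    (hS : U * A * T = Matrix.diagonal a)
    (hanz : ∀ i : Fin μ, (i : ℕ) < m → a i ≠ 0)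
    (haz : ∀ i : Fin μ, m ≤ (i : ℕ) → a i = 0)
    (hadvd : ∀ i j : Fin μ, i ≤ j → a i ∣ a j)
    (p : ℕ) [Fact p.Prime]
    (hps : (p : ℤ) ∣ a ⟨s, hsμ⟩)
    (hpnd : ∀ j : Fin μ, (j : ℕ) < s → ¬ (p : ℤ) ∣ a j) :
    Module.finrank (ZMod p)
      ((Fin μ → ZMod p) ⧸
        LinearMap.ker (Matrix.mulVecLin (A.map (Int.cast : ℤ → ZMod p)))) = s :=
  rank_mod_p_eq_of_elementary_divisors_general μ s hsμ A U T a hU hT hS hadvd p hps hpnd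
end

section
/- Two linear subspaces ℙ^{n/2}_{a,b} and ℙ^{n/2}_{a',b'} of the Fermat variety, given by the data (a,b) and (a',b') in the canonical form (b₀ = 0 and for even i, bᵢ minimal among unused indices), are equal as subvarieties of ℙ^{n+1} if and only if (a,b) = (a',b'). -/
/-!
Canonical form pins `b` down inductively: once `b` and `b'` agree on `0, …, 2k − 1`, both take
`b_{2k}` to be the least index not used so far. Testing the inclusion of the two subspaces on the
point whose only nonzero coordinates are `x_{b_{2k}} = ζ^{1+2a_k}` and `x_{b_{2k+1}} = 1` then
forces `b'_{2k+1} = b_{2k+1}` and `ζ^{1+2a'_k} = ζ^{1+2a_k}`, hence `a'_k = a_k` because `ζ` is a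
primitive `2d`-th root of unity.
-/

open Complex

/-- The (affine cone over the) linear subspace `ℙ^{n/2}_{a,b}` of the Fermat variety:
solutions of `x_{b_{2k}} − ζ_{2d}^{1+2a_{2k+1}} x_{b_{2k+1}} = 0` for `k = 0,…,n/2`. -/
def linearCycleSet (n d : ℕ) (a : Fin (n / 2 + 1) → Fin d)
    (b : Equiv.Perm (Fin (n + 2))) : Set (Fin (n + 2) → ℂ) :=
  {x | ∀ k : Fin (n / 2 + 1),
    x (b ⟨2 * (k : ℕ), by have := k.isLt; omega⟩) =
      Complex.exp (2 * Real.pi * Complex.I / (2 * d)) ^ (1 + 2 * (a k : ℕ)) *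
        x (b ⟨2 * (k : ℕ) + 1, by have := k.isLt; omega⟩)}

/-- The canonical-form condition on the permutation `b`: `b₀ = 0` and for each even
index `2k`, `b_{2k}` is the smallest element not among `b₀,…,b_{2k−1}`. -/
def canonicalPerm (n : ℕ) (b : Equiv.Perm (Fin (n + 2))) : Prop :=
  b 0 = 0 ∧
  ∀ (k : ℕ) (hk : 2 * k < n + 2), ∀ j : Fin (n + 2),
    (∀ i : Fin (n + 2), (i : ℕ) < 2 * k → b i ≠ j) → b ⟨2 * k, hk⟩ ≤ j

/-- `ζ_{2d}^{1+2i}`, the `i`-th of the `d` roots of `-1`. -/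
noncomputable def negOneRoot (d : ℕ) (i : Fin d) : ℂ :=
  exp (2 * Real.pi * I / (2 * d)) ^ (1 + 2 * (i : ℕ))

theorem negOneRoot_ne_zero {d : ℕ} (i : Fin d) : negOneRoot d i ≠ 0 :=
  pow_ne_zero _ (exp_ne_zero _)

theorem negOneRoot_injective (d : ℕ) : Function.Injective (negOneRoot d) := by
  intro i j hij
  have hprim : IsPrimitiveRoot (exp (2 * Real.pi * I / (2 * d))) (2 * d) := by
    have h := isPrimitiveRoot_exp (2 * d) (by have := i.pos; omega)
    rwa [Nat.cast_mul, Nat.cast_ofNat] at h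
  have := hprim.pow_inj (by omega) (by omega) hij
  exact Fin.ext (by omega)

section Pairs

variable {n d : ℕ}

def evenIndex (k : Fin (n / 2 + 1)) : Fin (n + 2) := ⟨2 * (k : ℕ), by omega⟩

def oddIndex (k : Fin (n / 2 + 1)) : Fin (n + 2) := ⟨2 * (k : ℕ) + 1, by omega⟩

theorem evenIndex_injective : Function.Injective (evenIndex (n := n)) :=
  fun k j h => Fin.ext (by simpa [evenIndex] using h)

theorem oddIndex_injective : Function.Injective (oddIndex (n := n)) :=
  fun k j h => Fin.ext (by simpa [oddIndex] using h)

theorem evenIndex_ne_oddIndex (k j : Fin (n / 2 + 1)) : evenIndex k ≠ oddIndex j := by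
  simp only [evenIndex, oddIndex, ne_eq, Fin.mk.injEq]
  omega

theorem mem_linearCycleSet {a : Fin (n / 2 + 1) → Fin d} {b : Equiv.Perm (Fin (n + 2))}
    {x : Fin (n + 2) → ℂ} :
    x ∈ linearCycleSet n d a b ↔
      ∀ k, x (b (evenIndex k)) = negOneRoot d (a k) * x (b (oddIndex k)) :=
  Iff.rfl

noncomputable def pairPoint (a : Fin (n / 2 + 1) → Fin d) (b : Equiv.Perm (Fin (n + 2)))
    (k : Fin (n / 2 + 1)) : Fin (n + 2) → ℂ :=
  Pi.single (b (evenIndex k)) (negOneRoot d (a k)) + Pi.single (b (oddIndex k)) 1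

theorem pairPoint_mem_linearCycleSet (a : Fin (n / 2 + 1) → Fin d)
    (b : Equiv.Perm (Fin (n + 2))) (k : Fin (n / 2 + 1)) :
    pairPoint a b k ∈ linearCycleSet n d a b := by
  rw [mem_linearCycleSet]
  intro j
  by_cases hjk : j = k
  · subst hjk
    simp [pairPoint, evenIndex_ne_oddIndex, (evenIndex_ne_oddIndex _ _).symm]
  · simp [pairPoint, evenIndex_injective.ne hjk, oddIndex_injective.ne hjk,
      evenIndex_ne_oddIndex, (evenIndex_ne_oddIndex _ _).symm]

theorem oddIndex_eq_and_eq_of_linearCycleSet_subset {a a' : Fin (n / 2 + 1) → Fin d}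
    {b b' : Equiv.Perm (Fin (n + 2))} (hS : linearCycleSet n d a b ⊆ linearCycleSet n d a' b')
    {k : Fin (n / 2 + 1)} (hk : b (evenIndex k) = b' (evenIndex k)) :
    b (oddIndex k) = b' (oddIndex k) ∧ a k = a' k := by
  have hx := mem_linearCycleSet.1 (hS (pairPoint_mem_linearCycleSet a b k)) k
  have hsep : b' (oddIndex k) ≠ b (evenIndex k) := by
    rw [hk, b'.injective.ne_iff]
    exact (evenIndex_ne_oddIndex k k).symm
  rw [← hk] at hx
  simp only [pairPoint, Pi.add_apply, Pi.single_eq_same, Pi.single_apply,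
    b.injective.eq_iff, evenIndex_ne_oddIndex, if_false, add_zero, if_neg hsep, zero_add] at hx
  by_cases hodd : b' (oddIndex k) = b (oddIndex k)
  · rw [if_pos hodd, mul_one] at hx
    exact ⟨hodd.symm, negOneRoot_injective d hx⟩
  · rw [if_neg hodd, mul_zero] at hx
    exact absurd hx (negOneRoot_ne_zero _)

end Pairs

theorem canonicalPerm.apply_le_of_eqOn {n : ℕ} {b b' : Equiv.Perm (Fin (n + 2))}
    (hb : canonicalPerm n b) {k : ℕ} (hk : 2 * k < n + 2)
    (h : ∀ i : Fin (n + 2), (i : ℕ) < 2 * k → b i = b' i) : b ⟨2 * k, hk⟩ ≤ b' ⟨2 * k, hk⟩ := by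
  refine hb.2 k hk _ fun i hi hbi => ?_
  rw [h i hi, b'.injective.eq_iff] at hbi
  exact hi.ne (congrArg Fin.val hbi)

theorem canonicalPerm.apply_eq_of_eqOn {n : ℕ} {b b' : Equiv.Perm (Fin (n + 2))}
    (hb : canonicalPerm n b) (hb' : canonicalPerm n b') {k : ℕ} (hk : 2 * k < n + 2)
    (h : ∀ i : Fin (n + 2), (i : ℕ) < 2 * k → b i = b' i) : b ⟨2 * k, hk⟩ = b' ⟨2 * k, hk⟩ :=
  (hb.apply_le_of_eqOn hk h).antisymm (hb'.apply_le_of_eqOn hk fun i hi => (h i hi).symm)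

theorem apply_eq_of_linearCycleSet_subset {n d : ℕ} {a a' : Fin (n / 2 + 1) → Fin d}
    {b b' : Equiv.Perm (Fin (n + 2))} (hS : linearCycleSet n d a b ⊆ linearCycleSet n d a' b')
    (hb : canonicalPerm n b) (hb' : canonicalPerm n b') :
    ∀ k ≤ n / 2 + 1, ∀ i : Fin (n + 2), (i : ℕ) < 2 * k → b i = b' i := by
  intro k
  induction k with
  | zero => intro _ i hi; omega
  | succ k ih =>
    intro hk i hi
    let p : Fin (n / 2 + 1) := ⟨k, by omega⟩
    have hbelow := ih (by omega)
    have heven : b (evenIndex p) = b' (evenIndex p) := hb.apply_eq_of_eqOn hb' _ hbelow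
    rcases Nat.lt_or_ge (i : ℕ) (2 * k) with hlt | hge
    · exact hbelow i hlt
    · obtain hieq | hieq : i = evenIndex p ∨ i = oddIndex p := by
        simp only [p, evenIndex, oddIndex, Fin.ext_iff]
        omega
      · rw [hieq, heven]
      · rw [hieq, (oddIndex_eq_and_eq_of_linearCycleSet_subset hS heven).1]

theorem linearCycleSet_eq_iff_general (n d : ℕ) (hn : Even n)
    (a a' : Fin (n / 2 + 1) → Fin d) (b b' : Equiv.Perm (Fin (n + 2)))
    (hb : canonicalPerm n b) (hb' : canonicalPerm n b') :
    linearCycleSet n d a b = linearCycleSet n d a' b' ↔ a = a' ∧ b = b' := by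
  refine ⟨fun hS => ?_, fun ⟨ha, hbb'⟩ => ha ▸ hbb' ▸ rfl⟩
  have hbb' : b = b' := Equiv.ext fun i =>
    apply_eq_of_linearCycleSet_subset hS.subset hb hb' _ le_rfl i
      (by obtain ⟨m, rfl⟩ := hn; omega)
  subst hbb'
  exact ⟨funext fun k => (oddIndex_eq_and_eq_of_linearCycleSet_subset hS.subset rfl).2, rfl⟩

/-- Two linear subspaces `ℙ^{n/2}_{a,b}` and `ℙ^{n/2}_{a',b'}` of the Fermat variety,
with `b`, `b'` in canonical form, are equal if and only if `(a,b) = (a',b')`. -/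
theorem linearCycleSet_eq_iff (n d : ℕ) (hn : Even n) (hn0 : 0 < n) (hd : 1 ≤ d)
    (a a' : Fin (n / 2 + 1) → Fin d) (b b' : Equiv.Perm (Fin (n + 2)))
    (hb : canonicalPerm n b) (hb' : canonicalPerm n b') :
    linearCycleSet n d a b = linearCycleSet n d a' b' ↔ a = a' ∧ b = b' :=
  linearCycleSet_eq_iff_general n d hn a a' b b' hb hb'
end

section
/- The linear subspace ℙ^{n/2+1} ⊂ ℙ^{n+1} defined by x₀ − ζ_{2d}x₁ = x₂ − ζ_{2d}x₃ = ⋯ = x_n − ζ_{2d}x_{n+1} = 0 intersects the Fermat variety x₀^d + ⋯ + x_{n+1}^d = 0 in the union of d linear subspaces of dimension n/2, each of the form ℙ^{n/2}_{a,b}, and any two of these d subspaces intersect in a common linear ℙ^{n/2−1}. -/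
/-!
On `L` each pair of coordinates with `x_{2k} = ζ x_{2k+1}` contributes
`(ζ^d + 1) x_{2k+1}^d = 0` to the Fermat sum, because `ζ^d = -1` for a primitive `2d`-th
root of unity `ζ`. So `L ∩ F` is cut out in `L` by `x_n^d + x_{n+1}^d = 0`, and since the
roots of `X^d = -1` are exactly the odd powers `ζ^(1+2j)`, `j < d`, this binary form splits
into the `d` distinct linear factors `x_n - ζ^(1+2j) x_{n+1}`. Two distinct factors vanish
together only where `x_n = x_{n+1} = 0`.
-/

open Complex Finset

theorem Finset.sum_range_eq_zero_of_pairs {M : Type*} [AddCommMonoid M] {n : ℕ} (hn : Even n)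
    (g : ℕ → M) (h : ∀ k, 2 * k + 1 < n → g (2 * k) + g (2 * k + 1) = 0) :
    ∑ i ∈ range n, g i = 0 := by
  obtain ⟨m, rfl⟩ := hn
  rw [← two_mul] at h ⊢
  induction m with
  | zero => simp
  | succ m ih =>
    rw [show 2 * (m + 1) = 2 * m + 1 + 1 by ring, sum_range_succ, sum_range_succ,
      ih fun k hk => h k (by omega), zero_add]
    exact h m (by omega)

theorem Fin.sum_eq_last_two_of_pairs {M : Type*} [AddCommMonoid M] {n : ℕ} (hn : Even n)
    (f : Fin (n + 2) → M)
    (h : ∀ (k : ℕ) (hk : 2 * k + 1 < n), f ⟨2 * k, by omega⟩ + f ⟨2 * k + 1, by omega⟩ = 0) :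
    ∑ i, f i = f ⟨n, by omega⟩ + f ⟨n + 1, by omega⟩ := by
  rw [sum_fin_eq_sum_range, sum_range_succ, sum_range_succ,
    sum_range_eq_zero_of_pairs hn _ fun k hk => ?_, zero_add]
  · simp
  · simp only [show 2 * k < n + 2 by omega, show 2 * k + 1 < n + 2 by omega, dif_pos]
    exact h k hk

namespace IsPrimitiveRoot

theorem injective_odd_pow {M : Type*} [CommMonoid M] {d : ℕ} {ζ : M}
    (hζ : IsPrimitiveRoot ζ (2 * d)) :
    Function.Injective fun j : Fin d => ζ ^ (1 + 2 * (j : ℕ)) := fun j j' h =>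
  Fin.ext <| by have := hζ.pow_inj (by omega) (by omega) h; omega

theorem pow_half_eq_neg_one {R : Type*} [CommRing R] [NoZeroDivisors R] {d : ℕ} {ζ : R}
    (hζ : IsPrimitiveRoot ζ (2 * d)) (hd : 0 < d) : ζ ^ d = -1 :=
  (hζ.pow (by omega) (mul_comm 2 d)).eq_neg_one_of_two_right

variable {K : Type*} [Field K] {d : ℕ} {ζ : K}

theorem pow_eq_neg_one_iff_exists_odd_pow (hζ : IsPrimitiveRoot ζ (2 * d)) (hd : 0 < d)
    {c : K} : c ^ d = -1 ↔ ∃ j : Fin d, c = ζ ^ (1 + 2 * (j : ℕ)) := by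
  have hζd := hζ.pow_half_eq_neg_one hd
  constructor
  · intro hc
    have hζ0 : ζ ≠ 0 := hζ.ne_zero (by omega)
    have : NeZero d := ⟨hd.ne'⟩
    have : (c / ζ) ^ d = 1 := by rw [div_pow, hc, hζd, neg_div_neg_eq, div_one]
    obtain ⟨i, hi, hpow⟩ := (hζ.pow (by omega) rfl).eq_pow_of_pow_eq_one this
    refine ⟨⟨i, hi⟩, ?_⟩
    rw [pow_add, pow_one, pow_mul, hpow, mul_div_cancel₀ _ hζ0]
  · rintro ⟨j, rfl⟩
    rw [← pow_mul, mul_comm, pow_mul, hζd, Odd.neg_one_pow ⟨j, add_comm _ _⟩]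

theorem pow_add_pow_eq_zero_iff (hζ : IsPrimitiveRoot ζ (2 * d)) (hd : 0 < d) {a b : K} :
    a ^ d + b ^ d = 0 ↔ ∃ j : Fin d, a = ζ ^ (1 + 2 * (j : ℕ)) * b := by
  rcases eq_or_ne b 0 with rfl | hb
  · simp only [zero_pow hd.ne', add_zero, mul_zero, pow_eq_zero_iff hd.ne', exists_const_iff]
    exact ⟨fun ha => ⟨⟨⟨0, hd⟩⟩, ha⟩, And.right⟩
  · simp_rw [← div_eq_iff hb, ← hζ.pow_eq_neg_one_iff_exists_odd_pow hd, div_pow,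
      div_eq_iff (pow_ne_zero d hb), add_eq_zero_iff_eq_neg, neg_one_mul]

end IsPrimitiveRoot

theorem eq_mul_and_eq_mul_iff_of_ne {M₀ : Type*} [MonoidWithZero M₀] [IsRightCancelMulZero M₀]
    {a b c c' : M₀} (hc : c ≠ c') : a = c * b ∧ a = c' * b ↔ a = 0 ∧ b = 0 := by
  constructor
  · rintro ⟨rfl, h⟩
    have hb : b = 0 := by_contra fun hb => hc (mul_right_cancel₀ hb h)
    exact ⟨by rw [hb, mul_zero], hb⟩
  · rintro ⟨rfl, rfl⟩
    simp

/-- The linear subspace `ℙ^{n/2+1} ⊂ ℙ^{n+1}` defined by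
`x₀ − ζ_{2d}x₁ = x₂ − ζ_{2d}x₃ = ⋯ = x_{n−2} − ζ_{2d}x_{n−1} = 0` meets the Fermat
variety `x₀^d + ⋯ + x_{n+1}^d = 0` in the union of `d` linear subspaces of dimension
`n/2`, each of the form `ℙ^{n/2}_{a,b}` (cut out inside `L` by
`x_n = ζ_{2d}^{1+2j} x_{n+1}`), and any two of these `d` subspaces intersect in the
common linear subspace `ℙ^{n/2−1}` given by `x_n = x_{n+1} = 0` inside `L`. -/
theorem fermat_meets_linear_space_in_d_cycles (n d : ℕ) (hn : Even n)
    (hd : 1 ≤ d) :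
    (let ζ : ℂ := Complex.exp (2 * Real.pi * Complex.I / (2 * d))
     let L : Set (Fin (n + 2) → ℂ) :=
       {x | ∀ (k : ℕ) (hk : 2 * k + 1 < n),
         x ⟨2 * k, by omega⟩ = ζ * x ⟨2 * k + 1, by omega⟩}
     let F : Set (Fin (n + 2) → ℂ) := {x | ∑ i : Fin (n + 2), x i ^ d = 0}
     let P : Fin d → Set (Fin (n + 2) → ℂ) := fun j =>
       {x ∈ L | x ⟨n, by omega⟩ = ζ ^ (1 + 2 * (j : ℕ)) * x ⟨n + 1, by omega⟩}
     (L ∩ F = ⋃ j : Fin d, P j) ∧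
       ∀ j j' : Fin d, j ≠ j' →
         P j ∩ P j' = {x ∈ L | x ⟨n, by omega⟩ = 0 ∧ x ⟨n + 1, by omega⟩ = 0}) := by
  intro ζ L F P
  have hζ : IsPrimitiveRoot ζ (2 * d) := by
    simpa using Complex.isPrimitiveRoot_exp (2 * d) (by omega)
  have hζd := hζ.pow_half_eq_neg_one hd
  have hsum : ∀ x ∈ L, ∑ i, x i ^ d = x ⟨n, by omega⟩ ^ d + x ⟨n + 1, by omega⟩ ^ d :=
    fun x hx => Fin.sum_eq_last_two_of_pairs hn _ fun k hk => by
      rw [hx k hk, mul_pow, hζd]; ring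
  refine ⟨Set.ext fun x => ?_, fun j j' hjj' => Set.ext fun x => ?_⟩
  · simp only [Set.mem_inter_iff, Set.mem_iUnion, P, Set.mem_ofPred_eq, exists_and_left]
    exact and_congr_right fun hx => by
      rw [show x ∈ F ↔ ∑ i, x i ^ d = 0 from Iff.rfl, hsum x hx, hζ.pow_add_pow_eq_zero_iff hd]
  · simp only [Set.mem_inter_iff, P, Set.mem_ofPred_eq]
    rw [← eq_mul_and_eq_mul_iff_of_ne (hζ.injective_odd_pow.ne hjj')]
    tauto
end
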